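/- Under the block decomposition W = [[W¹¹, W¹²],[0, W²²]], Λ = [[Λ¹¹, 0],[0, I_{n−n'}]] with the oblivious agents indexed n'+1,…,n (0 ≤ n' < n), suppose C is regular with limit C_* = lim_{k→∞} C^k, and either C_* = 0 or W²² is regular with limit W²²_* (where by convention W²²_* := 0 if C_* = 0 and lim_{k→∞}(W²²)^k does not exist). Then the solution of x(k+1) = (ΛW ⊗ C)x(k) + ((I_n − Λ) ⊗ I_m)u, x(0) = u = (u¹, u²), converges to the vector x'_C given blockwise by x'_C¹ = (I − Λ¹¹W¹¹ ⊗ C)^{-1}[((I − Λ¹¹) ⊗ I_m)u¹ + ((Λ¹¹W¹²W²²_*) ⊗ CC_*)u²] and x'_C² = (W²²_* ⊗ C_*)u². -/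

import Mathlib

/-!
Listing the oblivious agents last makes `ΛW` block upper triangular, so the iteration splits.
The oblivious block evolves on its own, `x²(k) = (W²²ᵏ ⊗ Cᵏ) u²`, and converges because `C` and
`W²²` are regular (or, when `C_* = 0`, because `‖W²²ᵏ‖ ≤ 1` and `Cᵏ → 0`). The other block obeys
`x¹(k+1) = N x¹(k) + c(k)` with `N = Λ¹¹W¹¹ ⊗ C` and `c(k)` convergent. As every non-oblivious
agent has a walk to a stubborn one, every row of a high enough power of `Λ¹¹W¹¹` sums to less
than one, whence `‖(Λ¹¹W¹¹)^q‖ < 1` in the row-sum norm; since the powers of `C` are bounded,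
`∑ₖ ‖Nᵏ‖` is finite. Such an affine recursion converges, and its limit is the fixed point
`(I - N)⁻¹ c(∞)`.
-/

open Filter Matrix Kronecker Finset Topology

attribute [local instance] Matrix.linftyOpNormedAddCommGroup Matrix.linftyOpNormedRing

section NormedRing

variable {R : Type*} [NormedRing R]

lemma antitone_norm_pow_of_norm_le_one {x : R} (hx : ‖x‖ ≤ 1) : Antitone fun n => ‖x ^ n‖ :=
  antitone_nat_of_succ_le fun n => by
    rw [pow_succ]
    exact (norm_mul_le _ _).trans (mul_le_of_le_one_right (norm_nonneg _) hx)

lemma summable_norm_pow_of_norm_pow_lt_one {x : R} (hx : ‖x‖ ≤ 1) {q : ℕ} (hq : 0 < q)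
    (hxq : ‖x ^ q‖ < 1) : Summable fun n => ‖x ^ n‖ := by
  have : NeZero q := ⟨hq.ne'⟩
  -- an antitone sequence is summable as soon as its subsequence along `q ℕ` is
  rw [← summable_indicator_mod_iff (antitone_norm_pow_of_norm_le_one hx) ((0 : ℕ) : ZMod q),
    summable_indicator_mod_iff_summable, ← summable_nat_add_iff 1]
  refine ((summable_geometric_of_lt_one (norm_nonneg _) hxq).mul_left ‖x ^ q‖).of_nonneg_of_le
    (fun _ => norm_nonneg _) fun n => ?_
  rw [add_zero, pow_mul, ← pow_succ']
  exact norm_pow_le' _ n.succ_pos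

end NormedRing

lemma Filter.Tendsto.matrix_mulVec {α m n R : Type*} [Fintype n] [NonUnitalNonAssocSemiring R]
    [TopologicalSpace R] [IsTopologicalSemiring R] {f : Filter α} {A : α → Matrix m n R}
    {v : α → n → R} {A' : Matrix m n R} {v' : n → R} (hA : Tendsto A f (𝓝 A'))
    (hv : Tendsto v f (𝓝 v')) : Tendsto (fun a => A a *ᵥ v a) f (𝓝 (A' *ᵥ v')) :=
  ((continuous_fst.matrix_mulVec continuous_snd).tendsto (A', v')).comp (hA.prodMk_nhds hv)

lemma Filter.Tendsto.kronecker {α l m n p R : Type*} [Mul R] [TopologicalSpace R]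
    [ContinuousMul R] {f : Filter α} {A : α → Matrix l m R} {B : α → Matrix n p R}
    {A' : Matrix l m R} {B' : Matrix n p R} (hA : Tendsto A f (𝓝 A'))
    (hB : Tendsto B f (𝓝 B')) : Tendsto (fun a => A a ⊗ₖ B a) f (𝓝 (A' ⊗ₖ B')) :=
  tendsto_pi_nhds.2 fun r => tendsto_pi_nhds.2 fun q =>
    (tendsto_pi_nhds.1 (tendsto_pi_nhds.1 hA r.1) q.1).mul
      (tendsto_pi_nhds.1 (tendsto_pi_nhds.1 hB r.2) q.2)

namespace Matrix

section AffineRecursion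

variable {ι : Type*} [Fintype ι] [DecidableEq ι] {N : Matrix ι ι ℝ}

lemma isUnit_det_one_sub_of_tendsto_pow_zero (hN : Tendsto (fun k => N ^ k) atTop (𝓝 0)) :
    IsUnit (1 - N).det := by
  refine isUnit_iff_ne_zero.2 fun hdet => ?_
  obtain ⟨v, hv0, hv⟩ := exists_mulVec_eq_zero_iff.2 hdet
  rw [sub_mulVec, one_mulVec, sub_eq_zero, eq_comm] at hv
  have hfix : ∀ k, N ^ k *ᵥ v = v := fun k => by
    induction k with
    | zero => simp
    | succ k ih => rw [pow_succ, ← mulVec_mulVec, hv, ih]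
  have hlim := hN.matrix_mulVec (tendsto_const_nhds (x := v))
  simp only [hfix, zero_mulVec] at hlim
  exact hv0 (tendsto_nhds_unique tendsto_const_nhds hlim)

lemma eq_pow_mulVec_add_sum_of_recursion {x c : ℕ → ι → ℝ}
    (hx : ∀ k, x (k + 1) = N *ᵥ x k + c k) (k : ℕ) :
    x k = N ^ k *ᵥ x 0 + ∑ j ∈ range k, N ^ j *ᵥ c (k - 1 - j) := by
  induction k with
  | zero => simp
  | succ k ih =>
    rw [hx, ih, mulVec_add, mulVec_mulVec, ← pow_succ', mulVec_sum, sum_range_succ', add_assoc]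
    congr 2
    · refine sum_congr rfl fun j _ => ?_
      rw [mulVec_mulVec, ← pow_succ']
      congr 2
      omega
    · simp

lemma tendsto_sum_range_pow_mulVec (hN : Summable fun k => ‖N ^ k‖) {c : ℕ → ι → ℝ}
    {c' : ι → ℝ} (hc : Tendsto c atTop (𝓝 c')) :
    Tendsto (fun k => ∑ j ∈ range k, N ^ j *ᵥ c (k - 1 - j)) atTop
      (𝓝 (∑' j, N ^ j *ᵥ c')) := by
  obtain ⟨D, hD⟩ := hc.norm.bddAbove_range
  have hcD : ∀ k, ‖c k‖ ≤ D := fun k => hD ⟨k, rfl⟩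
  let f : ℕ → ℕ → ι → ℝ := fun k j => if j < k then N ^ j *ᵥ c (k - 1 - j) else 0
  have hsum : ∀ k, ∑ j ∈ range k, N ^ j *ᵥ c (k - 1 - j) = ∑' j, f k j := fun k =>
    ((tsum_eq_sum fun j hj => if_neg (by simpa using hj)).trans
      (sum_congr rfl fun j hj => if_pos (mem_range.1 hj))).symm
  simp only [hsum]
  refine tendsto_tsum_of_dominated_convergence (hN.mul_right D) (fun j => ?_)
    (Eventually.of_forall fun k j => ?_)
  · have hshift : Tendsto (fun k => c (k - 1 - j)) atTop (𝓝 c') :=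
      hc.comp ((tendsto_sub_atTop_nat (1 + j)).congr fun k => (Nat.sub_sub k 1 j).symm)
    refine (tendsto_const_nhds.matrix_mulVec hshift).congr' ?_
    filter_upwards [eventually_gt_atTop j] with k hk
    simp [f, hk]
  · by_cases hjk : j < k
    · simp only [f, if_pos hjk]
      exact (linfty_opNorm_mulVec _ _).trans (mul_le_mul_of_nonneg_left (hcD _) (norm_nonneg _))
    · simp only [f, if_neg hjk, norm_zero]
      exact mul_nonneg (norm_nonneg _) ((norm_nonneg _).trans (hcD 0))

lemma tendsto_of_affine_recursion (hN : Summable fun k => ‖N ^ k‖) {x c : ℕ → ι → ℝ}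
    {c' : ι → ℝ} (hx : ∀ k, x (k + 1) = N *ᵥ x k + c k) (hc : Tendsto c atTop (𝓝 c')) :
    Tendsto x atTop (𝓝 ((1 - N)⁻¹ *ᵥ c')) := by
  have hpow : Tendsto (fun k => N ^ k) atTop (𝓝 0) :=
    tendsto_zero_iff_norm_tendsto_zero.2 hN.tendsto_atTop_zero
  set L := ∑' j, N ^ j *ᵥ c'
  have hconv : Tendsto x atTop (𝓝 L) := by
    have h := (hpow.matrix_mulVec (tendsto_const_nhds (x := x 0))).add
      (tendsto_sum_range_pow_mulVec hN hc)
    rw [zero_mulVec, zero_add] at h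
    exact h.congr fun k => (eq_pow_mulVec_add_sum_of_recursion hx k).symm
  have hfix : L = N *ᵥ L + c' := by
    refine tendsto_nhds_unique ((tendsto_add_atTop_iff_nat 1).2 hconv) ?_
    simp only [hx]
    exact (tendsto_const_nhds.matrix_mulVec hconv).add hc
  have hL : (1 - N) *ᵥ L = c' := by
    rw [sub_mulVec, one_mulVec, sub_eq_iff_eq_add, add_comm]
    exact hfix
  rwa [← hL, mulVec_mulVec, nonsing_inv_mul _ (isUnit_det_one_sub_of_tendsto_pow_zero hpow),
    one_mulVec]

end AffineRecursion

section Kronecker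

variable {l m n p : Type*} [Fintype l] [Fintype m] [Fintype n] [Fintype p]

lemma linfty_opNorm_kronecker_le (A : Matrix l m ℝ) (B : Matrix n p ℝ) :
    ‖A ⊗ₖ B‖ ≤ ‖A‖ * ‖B‖ := by
  rw [← coe_nnnorm, ← coe_nnnorm, ← coe_nnnorm, ← NNReal.coe_mul, NNReal.coe_le_coe,
    linfty_opNNNorm_def, linfty_opNNNorm_def, linfty_opNNNorm_def]
  refine Finset.sup_le fun r _ => ?_
  calc ∑ q : m × p, ‖(A ⊗ₖ B) r q‖₊ = (∑ j, ‖A r.1 j‖₊) * ∑ b, ‖B r.2 b‖₊ := by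
        simp only [kroneckerMap_apply, nnnorm_mul, Finset.sum_mul_sum, ← Finset.univ_product_univ,
          Finset.sum_product]
    _ ≤ _ := mul_le_mul' (le_sup (f := fun i => ∑ j, ‖A i j‖₊) (mem_univ _))
          (le_sup (f := fun i => ∑ j, ‖B i j‖₊) (mem_univ _))

lemma kronecker_pow {R : Type*} [CommSemiring R] [DecidableEq m] [DecidableEq n]
    (A : Matrix m m R) (B : Matrix n n R) (k : ℕ) : (A ⊗ₖ B) ^ k = (A ^ k) ⊗ₖ (B ^ k) := by
  induction k with
  | zero => simp
  | succ k ih => rw [pow_succ, pow_succ, pow_succ, ih, mul_kronecker_mul]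

lemma summable_norm_pow_kronecker [DecidableEq m] [DecidableEq n] {A : Matrix m m ℝ}
    {B : Matrix n n ℝ} (hA : Summable fun k => ‖A ^ k‖)
    (hB : BddAbove (Set.range fun k => ‖B ^ k‖)) : Summable fun k => ‖(A ⊗ₖ B) ^ k‖ := by
  obtain ⟨K, hK⟩ := hB
  refine (hA.mul_right K).of_nonneg_of_le (fun _ => norm_nonneg _) fun k => ?_
  rw [kronecker_pow]
  exact (linfty_opNorm_kronecker_le _ _).trans
    (mul_le_mul_of_nonneg_left (hK ⟨k, rfl⟩) (norm_nonneg _))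

lemma tendsto_kronecker_zero_of_norm_le {α : Type*} {f : Filter α} {A : α → Matrix l m ℝ}
    {B : α → Matrix n p ℝ} {K : ℝ} (hA : ∀ a, ‖A a‖ ≤ K) (hB : Tendsto B f (𝓝 0)) :
    Tendsto (fun a => A a ⊗ₖ B a) f (𝓝 0) := by
  refine squeeze_zero_norm (fun a => (linfty_opNorm_kronecker_le _ _).trans
    (mul_le_mul_of_nonneg_right (hA a) (norm_nonneg _))) ?_
  simpa using (tendsto_zero_iff_norm_tendsto_zero.1 hB).const_mul K

end Kronecker

section Substochastic

lemma sum_mul_apply {ι κ μ : Type*} [Fintype κ] [Fintype μ] (A : Matrix ι κ ℝ)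
    (B : Matrix κ μ ℝ) (i : ι) : ∑ j, (A * B) i j = ∑ p, A i p * ∑ j, B p j := by
  simp_rw [mul_apply, Finset.mul_sum]
  exact Finset.sum_comm

variable {ι : Type*} [Fintype ι]

lemma linfty_opNorm_le_one_of_sum_apply_le_one {A : Matrix ι ι ℝ} (h0 : ∀ i j, 0 ≤ A i j)
    (h1 : ∀ i, ∑ j, A i j ≤ 1) : ‖A‖ ≤ 1 := by
  rw [linfty_opNorm_def, NNReal.coe_le_one, Finset.sup_le_iff]
  intro i _
  rw [← NNReal.coe_le_one]
  push_cast
  simpa only [Real.norm_of_nonneg (h0 i _)] using h1 i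

lemma linfty_opNorm_lt_one_of_sum_apply_lt_one {A : Matrix ι ι ℝ} (h0 : ∀ i j, 0 ≤ A i j)
    (h1 : ∀ i, ∑ j, A i j < 1) : ‖A‖ < 1 := by
  rw [linfty_opNorm_def, NNReal.coe_lt_one, Finset.sup_lt_iff zero_lt_one]
  intro i _
  rw [← NNReal.coe_lt_one]
  push_cast
  simpa only [Real.norm_of_nonneg (h0 i _)] using h1 i

variable [DecidableEq ι] {B : Matrix ι ι ℝ}

lemma linfty_opNorm_le_one_of_mem_rowStochastic (hB : B ∈ rowStochastic ℝ ι) : ‖B‖ ≤ 1 :=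
  linfty_opNorm_le_one_of_sum_apply_le_one (fun _ _ => nonneg_of_mem_rowStochastic hB)
    fun i => (sum_row_of_mem_rowStochastic hB i).le

lemma antitone_sum_pow_apply (h0 : ∀ i j, 0 ≤ B i j) (h1 : ∀ i, ∑ j, B i j ≤ 1) (i : ι) :
    Antitone fun k => ∑ j, (B ^ k) i j := by
  refine antitone_nat_of_succ_le fun k => ?_
  rw [pow_succ, sum_mul_apply]
  exact sum_le_sum fun p _ => mul_le_of_le_one_right (pow_apply_nonneg h0 k i p) (h1 p)

lemma sum_pow_apply_le_one (h0 : ∀ i j, 0 ≤ B i j) (h1 : ∀ i, ∑ j, B i j ≤ 1) (k : ℕ)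
    (i : ι) : ∑ j, (B ^ k) i j ≤ 1 := by
  simpa [one_apply] using antitone_sum_pow_apply h0 h1 i (Nat.zero_le k)

lemma sum_pow_succ_apply_lt_one (h0 : ∀ i j, 0 ≤ B i j) (h1 : ∀ i, ∑ j, B i j ≤ 1)
    {i p : ι} (hip : 0 < B i p) {k : ℕ} (hp : ∑ j, (B ^ k) p j < 1) :
    ∑ j, (B ^ (k + 1)) i j < 1 := by
  rw [pow_succ', sum_mul_apply]
  calc ∑ r, B i r * ∑ j, (B ^ k) r j < ∑ r, B i r :=
        sum_lt_sum (fun r _ => mul_le_of_le_one_right (h0 i r) (sum_pow_apply_le_one h0 h1 k r))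
          ⟨p, mem_univ p, mul_lt_of_lt_one_right hip hp⟩
    _ ≤ 1 := h1 i

lemma exists_linfty_opNorm_pow_lt_one (h0 : ∀ i j, 0 ≤ B i j) (h1 : ∀ i, ∑ j, B i j ≤ 1)
    (h : ∀ i, ∃ k, ∑ j, (B ^ k) i j < 1) : ∃ q, 0 < q ∧ ‖B ^ q‖ < 1 := by
  choose k hk using h
  refine ⟨univ.sup k + 1, Nat.succ_pos _, linfty_opNorm_lt_one_of_sum_apply_lt_one
    (pow_apply_nonneg h0 _) fun i => ?_⟩
  exact (antitone_sum_pow_apply h0 h1 i ((le_sup (mem_univ i)).trans (Nat.le_succ _))).trans_lt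
    (hk i)

end Substochastic

section Stubborn

variable {ι : Type*} [Fintype ι] [DecidableEq ι] {W : Matrix ι ι ℝ} {lam : ι → ℝ}

lemma diagonal_mul_apply_nonneg (hW0 : ∀ i j, 0 ≤ W i j) (hlam : ∀ i, 0 ≤ lam i) (i j : ι) :
    0 ≤ (diagonal lam * W) i j := by
  rw [diagonal_mul]
  exact mul_nonneg (hlam i) (hW0 i j)

lemma sum_diagonal_mul_apply_le_one (hW0 : ∀ i j, 0 ≤ W i j) (hW1 : ∀ i, ∑ j, W i j ≤ 1)
    (hlam : ∀ i, lam i ≤ 1) (i : ι) : ∑ j, (diagonal lam * W) i j ≤ 1 := by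
  simp only [diagonal_mul, ← Finset.mul_sum]
  exact mul_le_one₀ (hlam i) (sum_nonneg fun j _ => hW0 i j) (hW1 i)

lemma sum_diagonal_mul_apply_lt_one (hW1 : ∀ i, ∑ j, W i j ≤ 1) {i : ι} (hi0 : 0 ≤ lam i)
    (hi : lam i < 1) : ∑ j, (diagonal lam * W) i j < 1 := by
  simp only [diagonal_mul, ← Finset.mul_sum]
  nlinarith [mul_le_mul_of_nonneg_left (hW1 i) hi0]

lemma exists_sum_pow_diagonal_mul_apply_lt_one (hW0 : ∀ i j, 0 ≤ W i j)
    (hW1 : ∀ i, ∑ j, W i j ≤ 1) (hlam : ∀ i, 0 ≤ lam i ∧ lam i ≤ 1) {i j : ι}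
    (hij : Relation.ReflTransGen (fun a b => 0 < W a b) i j) (hj : lam j < 1) :
    ∃ k, ∑ l, ((diagonal lam * W) ^ k) i l < 1 := by
  induction hij using Relation.ReflTransGen.head_induction_on with
  | refl => exact ⟨1, by simpa using sum_diagonal_mul_apply_lt_one hW1 (hlam j).1 hj⟩
  | @head a b hab _ ih =>
    obtain ⟨k, hk⟩ := ih
    rcases (hlam a).2.lt_or_eq with ha | ha
    · exact ⟨1, by simpa using sum_diagonal_mul_apply_lt_one hW1 (hlam a).1 ha⟩
    · refine ⟨k + 1, sum_pow_succ_apply_lt_one (diagonal_mul_apply_nonneg hW0 fun i => (hlam i).1)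
        (sum_diagonal_mul_apply_le_one hW0 hW1 fun i => (hlam i).2) ?_ hk⟩
      rwa [diagonal_mul, ha, one_mul]

lemma summable_norm_pow_diagonal_mul (hW0 : ∀ i j, 0 ≤ W i j) (hW1 : ∀ i, ∑ j, W i j ≤ 1)
    (hlam : ∀ i, 0 ≤ lam i ∧ lam i ≤ 1)
    (hreach : ∀ i, lam i < 1 ∨ ∃ j, lam j < 1 ∧ Relation.TransGen (fun a b => 0 < W a b) i j) :
    Summable fun k => ‖(diagonal lam * W) ^ k‖ := by
  have hB0 := diagonal_mul_apply_nonneg hW0 fun i => (hlam i).1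
  have hB1 := sum_diagonal_mul_apply_le_one hW0 hW1 fun i => (hlam i).2
  obtain ⟨q, hq, hlt⟩ := exists_linfty_opNorm_pow_lt_one hB0 hB1 fun i => by
    rcases hreach i with hi | ⟨j, hj, hij⟩
    · exact exists_sum_pow_diagonal_mul_apply_lt_one hW0 hW1 hlam .refl hi
    · exact exists_sum_pow_diagonal_mul_apply_lt_one hW0 hW1 hlam hij.to_reflTransGen hj
  exact summable_norm_pow_of_norm_pow_lt_one (linfty_opNorm_le_one_of_sum_apply_le_one hB0 hB1)
    hq hlt

end Stubborn

section Blocks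

variable {α β γ α' β' δ R : Type*}

def blockInl (x : (α ⊕ β) × γ → R) : α × γ → R := fun p => x (Sum.inl p.1, p.2)

def blockInr (x : (α ⊕ β) × γ → R) : β × γ → R := fun p => x (Sum.inr p.1, p.2)

lemma blockInl_add [Add R] (x y : (α ⊕ β) × γ → R) :
    blockInl (x + y) = blockInl x + blockInl y := rfl

lemma blockInr_add [Add R] (x y : (α ⊕ β) × γ → R) :
    blockInr (x + y) = blockInr x + blockInr y := rfl

lemma tendsto_of_tendsto_blockInl_of_tendsto_blockInr {ι : Type*} [TopologicalSpace R]
    {f : Filter ι} {x : ι → (α ⊕ β) × γ → R} {y₁ : α × γ → R} {y₂ : β × γ → R}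
    (h₁ : Tendsto (fun k => blockInl (x k)) f (𝓝 y₁))
    (h₂ : Tendsto (fun k => blockInr (x k)) f (𝓝 y₂)) :
    Tendsto x f (𝓝 fun q => Sum.elim (fun i => y₁ (i, q.2)) (fun i => y₂ (i, q.2)) q.1) := by
  refine tendsto_pi_nhds.2 fun ⟨s, a⟩ => ?_
  cases s with
  | inl i => exact tendsto_pi_nhds.1 h₁ (i, a)
  | inr i => exact tendsto_pi_nhds.1 h₂ (i, a)

variable [Fintype α'] [Fintype β'] [Fintype δ] [NonUnitalNonAssocSemiring R]

lemma blockInl_fromBlocks_kronecker_mulVec (A : Matrix α α' R) (B : Matrix α β' R)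
    (C : Matrix β α' R) (D : Matrix β β' R) (E : Matrix γ δ R) (x : (α' ⊕ β') × δ → R) :
    blockInl ((fromBlocks A B C D ⊗ₖ E) *ᵥ x)
      = (A ⊗ₖ E) *ᵥ blockInl x + (B ⊗ₖ E) *ᵥ blockInr x := by
  ext ⟨i, a⟩
  simp only [blockInl, blockInr, mulVec, dotProduct, kroneckerMap_apply, Pi.add_apply,
    Fintype.sum_prod_type, Fintype.sum_sum_type, fromBlocks_apply₁₁, fromBlocks_apply₁₂]

lemma blockInr_fromBlocks_kronecker_mulVec (A : Matrix α α' R) (B : Matrix α β' R)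
    (C : Matrix β α' R) (D : Matrix β β' R) (E : Matrix γ δ R) (x : (α' ⊕ β') × δ → R) :
    blockInr ((fromBlocks A B C D ⊗ₖ E) *ᵥ x)
      = (C ⊗ₖ E) *ᵥ blockInl x + (D ⊗ₖ E) *ᵥ blockInr x := by
  ext ⟨i, a⟩
  simp only [blockInl, blockInr, mulVec, dotProduct, kroneckerMap_apply, Pi.add_apply,
    Fintype.sum_prod_type, Fintype.sum_sum_type, fromBlocks_apply₂₁, fromBlocks_apply₂₂]

end Blocks

section BlockTriangular

variable {α β : Type*}

lemma transGen_pos_fromBlocks_inl {R : Type*} [Zero R] [Preorder R] {A : Matrix α α R}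
    {B : Matrix α β R} {D : Matrix β β R} {a b : α}
    (h : Relation.TransGen (fun i j => 0 < fromBlocks A B 0 D i j) (.inl a) (.inl b)) :
    Relation.TransGen (fun i j => 0 < A i j) a b := by
  generalize hi : (Sum.inl a : α ⊕ β) = i at h
  generalize hj : (Sum.inl b : α ⊕ β) = j at h
  induction h generalizing b with
  | single h => subst hi hj; exact .single h
  | @tail c _ _ h ih =>
    subst hj
    cases c with
    | inl c => exact .tail (ih rfl) h
    | inr c => exact absurd h (lt_irrefl 0)

variable [DecidableEq α] [DecidableEq β]

lemma diagonal_sum_elim_one_mul_fromBlocks [Fintype α] [Fintype β] (lam : α → ℝ)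
    (A : Matrix α α ℝ) (B : Matrix α β ℝ) (D : Matrix β β ℝ) :
    diagonal (Sum.elim lam fun _ => 1) * fromBlocks A B 0 D
      = fromBlocks (diagonal lam * A) (diagonal lam * B) 0 D := by
  rw [← fromBlocks_diagonal, fromBlocks_multiply]
  simp

lemma one_sub_diagonal_sum_elim_one (lam : α → ℝ) :
    (1 : Matrix (α ⊕ β) (α ⊕ β) ℝ) - diagonal (Sum.elim lam fun _ => 1)
      = fromBlocks (1 - diagonal lam) 0 0 0 := by
  rw [← fromBlocks_diagonal, ← fromBlocks_one, sub_eq_add_neg, fromBlocks_neg, fromBlocks_add]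
  simp [sub_eq_add_neg]

variable [Fintype α] [Fintype β]

lemma sum_apply_le_one_of_fromBlocks_mem_rowStochastic {A : Matrix α α ℝ} {B : Matrix α β ℝ}
    {C : Matrix β α ℝ} {D : Matrix β β ℝ} (h : fromBlocks A B C D ∈ rowStochastic ℝ (α ⊕ β))
    (i : α) : ∑ j, A i j ≤ 1 := by
  have hrow := sum_row_of_mem_rowStochastic h (.inl i)
  simp only [Fintype.sum_sum_type, fromBlocks_apply₁₁, fromBlocks_apply₁₂] at hrow
  have hB : 0 ≤ ∑ j, B i j := sum_nonneg fun j _ => by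
    simpa using nonneg_of_mem_rowStochastic h (i := .inl i) (j := .inr j)
  linarith

lemma mem_rowStochastic_of_fromBlocks_mem_rowStochastic {A : Matrix α α ℝ} {B : Matrix α β ℝ}
    {D : Matrix β β ℝ} (h : fromBlocks A B 0 D ∈ rowStochastic ℝ (α ⊕ β)) :
    D ∈ rowStochastic ℝ β := by
  refine mem_rowStochastic_iff_sum.2 ⟨fun i j => ?_, fun i => ?_⟩
  · simpa using nonneg_of_mem_rowStochastic h (i := .inr i) (j := .inr j)
  · simpa [Fintype.sum_sum_type] using sum_row_of_mem_rowStochastic h (.inr i)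

lemma tendsto_pow_kronecker_pow {γ : Type*} [Fintype γ] [DecidableEq γ] {D D' : Matrix β β ℝ}
    {E E' : Matrix γ γ ℝ} (hD : D ∈ rowStochastic ℝ β) (hE : Tendsto (fun k => E ^ k) atTop (𝓝 E'))
    (h : Tendsto (fun k => D ^ k) atTop (𝓝 D') ∨ (E' = 0 ∧ D' = 0)) :
    Tendsto (fun k => (D ^ k) ⊗ₖ (E ^ k)) atTop (𝓝 (D' ⊗ₖ E')) := by
  rcases h with hD' | ⟨rfl, rfl⟩
  · exact hD'.kronecker hE
  · rw [zero_kronecker]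
    exact tendsto_kronecker_zero_of_norm_le
      (fun k => linfty_opNorm_le_one_of_mem_rowStochastic (pow_mem hD k)) hE

lemma tendsto_iterate_fromBlocks_kronecker {γ : Type*} [Fintype γ] [DecidableEq γ]
    {A : Matrix α α ℝ} {B : Matrix α β ℝ} {D D' : Matrix β β ℝ} {E E' : Matrix γ γ ℝ}
    {b : (α ⊕ β) × γ → ℝ} (hA : Summable fun k => ‖(A ⊗ₖ E) ^ k‖)
    (hD : Tendsto (fun k => (D ^ k) ⊗ₖ (E ^ k)) atTop (𝓝 (D' ⊗ₖ E'))) (hb : blockInr b = 0)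
    (u : (α ⊕ β) × γ → ℝ) :
    Tendsto (fun k => (fun x => (fromBlocks A B 0 D ⊗ₖ E) *ᵥ x + b)^[k] u) atTop
      (𝓝 fun q => Sum.elim
        (fun i => ((1 - A ⊗ₖ E)⁻¹ *ᵥ (blockInl b + ((B * D') ⊗ₖ (E * E')) *ᵥ blockInr u)) (i, q.2))
        (fun i => ((D' ⊗ₖ E') *ᵥ blockInr u) (i, q.2)) q.1) := by
  set T := fun x => (fromBlocks A B 0 D ⊗ₖ E) *ᵥ x + b
  have hT : ∀ k, T^[k + 1] u = T (T^[k] u) := fun k => Function.iterate_succ_apply' T k u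
  have hx₂ : ∀ k, blockInr (T^[k] u) = ((D ^ k) ⊗ₖ (E ^ k)) *ᵥ blockInr u := fun k => by
    induction k with
    | zero => simp
    | succ k ih =>
      rw [hT, blockInr_add, blockInr_fromBlocks_kronecker_mulVec, ih, hb]
      simp [mulVec_mulVec, ← mul_kronecker_mul, ← pow_succ']
  have hx₁ : ∀ k, blockInl (T^[k + 1] u) = (A ⊗ₖ E) *ᵥ blockInl (T^[k] u)
      + ((B ⊗ₖ E) *ᵥ blockInr (T^[k] u) + blockInl b) := fun k => by
    rw [hT, blockInl_add, blockInl_fromBlocks_kronecker_mulVec, add_assoc]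
  have hlim₂ : Tendsto (fun k => blockInr (T^[k] u)) atTop (𝓝 ((D' ⊗ₖ E') *ᵥ blockInr u)) := by
    simpa only [hx₂] using hD.matrix_mulVec tendsto_const_nhds
  have hlim₁ := tendsto_of_affine_recursion (x := fun k => blockInl (T^[k] u)) hA hx₁
    ((tendsto_const_nhds.matrix_mulVec hlim₂).add tendsto_const_nhds)
  rw [mulVec_mulVec, ← mul_kronecker_mul, add_comm] at hlim₁
  exact tendsto_of_tendsto_blockInl_of_tendsto_blockInr hlim₁ hlim₂

end BlockTriangular

end Matrix

theorem fj_multidim_convergence_formula_general {n₁ n₂ m : ℕ}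
    (W11 : Matrix (Fin n₁) (Fin n₁) ℝ) (W12 : Matrix (Fin n₁) (Fin n₂) ℝ)
    (W22 : Matrix (Fin n₂) (Fin n₂) ℝ) (lam1 : Fin n₁ → ℝ)
    (W : Matrix (Fin n₁ ⊕ Fin n₂) (Fin n₁ ⊕ Fin n₂) ℝ)
    (hWblock : W = Matrix.fromBlocks W11 W12 0 W22)
    (lam : Fin n₁ ⊕ Fin n₂ → ℝ)
    (hlamblock : lam = Sum.elim lam1 (fun _ => 1))
    (hW0 : ∀ i j, 0 ≤ W i j) (hW1 : ∀ i, ∑ j, W i j = 1)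
    (hlam : ∀ i, 0 ≤ lam i ∧ lam i ≤ 1)
    (C : Matrix (Fin m) (Fin m) ℝ)
    -- the oblivious agents are exactly the agents of the second block:
    (hobl : ∀ i : Fin n₁ ⊕ Fin n₂,
      (¬ (lam i < 1 ∨ ∃ j, lam j < 1 ∧ Relation.TransGen (fun a b => 0 < W a b) i j)) ↔
        ∃ i₂ : Fin n₂, i = Sum.inr i₂)
    (Cstar : Matrix (Fin m) (Fin m) ℝ)
    (hC : Tendsto (fun k => C ^ k) atTop (nhds Cstar))
    (W22star : Matrix (Fin n₂) (Fin n₂) ℝ)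
    (hW22 : Tendsto (fun k => W22 ^ k) atTop (nhds W22star) ∨
      (Cstar = 0 ∧ W22star = 0)) :
    ∀ u : (Fin n₁ ⊕ Fin n₂) × Fin m → ℝ,
      Tendsto (fun k => (fun x => ((Matrix.diagonal lam * W) ⊗ₖ C).mulVec x
          + ((1 - Matrix.diagonal lam) ⊗ₖ (1 : Matrix (Fin m) (Fin m) ℝ)).mulVec u)^[k] u)
        atTop
        (nhds (fun q : (Fin n₁ ⊕ Fin n₂) × Fin m =>
          Sum.elim
            (fun i : Fin n₁ =>
              (1 - (Matrix.diagonal lam1 * W11) ⊗ₖ C)⁻¹.mulVec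
                (((1 - Matrix.diagonal lam1) ⊗ₖ (1 : Matrix (Fin m) (Fin m) ℝ)).mulVec
                    (fun p : Fin n₁ × Fin m => u (Sum.inl p.1, p.2))
                  + ((Matrix.diagonal lam1 * W12 * W22star) ⊗ₖ (C * Cstar)).mulVec
                    (fun p : Fin n₂ × Fin m => u (Sum.inr p.1, p.2)))
                (i, q.2))
            (fun i : Fin n₂ =>
              (W22star ⊗ₖ Cstar).mulVec
                (fun p : Fin n₂ × Fin m => u (Sum.inr p.1, p.2)) (i, q.2))
            q.1)) := by
  subst hWblock hlamblock
  intro u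
  have hW : fromBlocks W11 W12 0 W22 ∈ rowStochastic ℝ (Fin n₁ ⊕ Fin n₂) :=
    mem_rowStochastic_iff_sum.2 ⟨hW0, hW1⟩
  have hreach : ∀ i, lam1 i < 1 ∨
      ∃ j, lam1 j < 1 ∧ Relation.TransGen (fun a b => 0 < W11 a b) i j := fun i => by
    rcases not_not.1 (mt (hobl (.inl i)).1 (by simp)) with hi | ⟨j | j, hj, hij⟩
    · exact .inl hi
    · exact .inr ⟨j, hj, transGen_pos_fromBlocks_inl hij⟩
    · simp at hj
  have hN : Summable fun k => ‖((diagonal lam1 * W11) ⊗ₖ C) ^ k‖ :=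
    summable_norm_pow_kronecker (summable_norm_pow_diagonal_mul
      (fun i j => by simpa using hW0 (.inl i) (.inl j))
      (sum_apply_le_one_of_fromBlocks_mem_rowStochastic hW)
      (fun i => by simpa using hlam (.inl i)) hreach) hC.norm.bddAbove_range
  set b := (fromBlocks (1 - diagonal lam1) 0 0 (0 : Matrix (Fin n₂) (Fin n₂) ℝ) ⊗ₖ
    (1 : Matrix (Fin m) (Fin m) ℝ)) *ᵥ u
  have hb₁ : blockInl b
      = ((1 - diagonal lam1) ⊗ₖ (1 : Matrix (Fin m) (Fin m) ℝ)) *ᵥ blockInl u := by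
    simp [b, blockInl_fromBlocks_kronecker_mulVec]
  have hb₂ : blockInr b = 0 := by simp [b, blockInr_fromBlocks_kronecker_mulVec]
  have hlim := tendsto_iterate_fromBlocks_kronecker (B := diagonal lam1 * W12) hN
    (tendsto_pow_kronecker_pow (mem_rowStochastic_of_fromBlocks_mem_rowStochastic hW) hC hW22)
    hb₂ u
  rw [hb₁] at hlim
  rwa [diagonal_sum_elim_one_mul_fromBlocks, one_sub_diagonal_sum_elim_one]

/-- under the block decomposition with oblivious agents in the second block,
if C is regular with limit C_* and either W²² is regular with limit W²²_* or (by convention)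
C_* = 0 and W²²_* = 0, then the multidimensional FJ dynamics converge to the vector x'_C
given blockwise by x'_C¹ = (I - Λ¹¹W¹¹ ⊗ C)⁻¹[((I-Λ¹¹) ⊗ I)u¹ + ((Λ¹¹W¹²W²²_*) ⊗ CC_*)u²],
x'_C² = (W²²_* ⊗ C_*)u². -/
theorem fj_multidim_convergence_formula {n₁ n₂ m : ℕ} (hn₂ : 0 < n₂)
    (W11 : Matrix (Fin n₁) (Fin n₁) ℝ) (W12 : Matrix (Fin n₁) (Fin n₂) ℝ)
    (W22 : Matrix (Fin n₂) (Fin n₂) ℝ) (lam1 : Fin n₁ → ℝ)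
    (W : Matrix (Fin n₁ ⊕ Fin n₂) (Fin n₁ ⊕ Fin n₂) ℝ)
    (hWblock : W = Matrix.fromBlocks W11 W12 0 W22)
    (lam : Fin n₁ ⊕ Fin n₂ → ℝ)
    (hlamblock : lam = Sum.elim lam1 (fun _ => 1))
    (hW0 : ∀ i j, 0 ≤ W i j) (hW1 : ∀ i, ∑ j, W i j = 1)
    (hlam : ∀ i, 0 ≤ lam i ∧ lam i ≤ 1)
    (C : Matrix (Fin m) (Fin m) ℝ)
    -- the oblivious agents are exactly the agents of the second block:
    (hobl : ∀ i : Fin n₁ ⊕ Fin n₂,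
      (¬ (lam i < 1 ∨ ∃ j, lam j < 1 ∧ Relation.TransGen (fun a b => 0 < W a b) i j)) ↔
        ∃ i₂ : Fin n₂, i = Sum.inr i₂)
    (Cstar : Matrix (Fin m) (Fin m) ℝ)
    (hC : Tendsto (fun k => C ^ k) atTop (nhds Cstar))
    (W22star : Matrix (Fin n₂) (Fin n₂) ℝ)
    (hW22 : Tendsto (fun k => W22 ^ k) atTop (nhds W22star) ∨
      (Cstar = 0 ∧ W22star = 0)) :
    ∀ u : (Fin n₁ ⊕ Fin n₂) × Fin m → ℝ,
      Tendsto (fun k => (fun x => ((Matrix.diagonal lam * W) ⊗ₖ C).mulVec x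
          + ((1 - Matrix.diagonal lam) ⊗ₖ (1 : Matrix (Fin m) (Fin m) ℝ)).mulVec u)^[k] u)
        atTop
        (nhds (fun q : (Fin n₁ ⊕ Fin n₂) × Fin m =>
          Sum.elim
            (fun i : Fin n₁ =>
              (1 - (Matrix.diagonal lam1 * W11) ⊗ₖ C)⁻¹.mulVec
                (((1 - Matrix.diagonal lam1) ⊗ₖ (1 : Matrix (Fin m) (Fin m) ℝ)).mulVec
                    (fun p : Fin n₁ × Fin m => u (Sum.inl p.1, p.2))
                  + ((Matrix.diagonal lam1 * W12 * W22star) ⊗ₖ (C * Cstar)).mulVec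
                    (fun p : Fin n₂ × Fin m => u (Sum.inr p.1, p.2)))
                (i, q.2))
            (fun i : Fin n₂ =>
              (W22star ⊗ₖ Cstar).mulVec
                (fun p : Fin n₂ × Fin m => u (Sum.inr p.1, p.2)) (i, q.2))
            q.1)) :=
  fj_multidim_convergence_formula_general W11 W12 W22 lam1 W hWblock lam hlamblock hW0 hW1 hlam C
    hobl Cstar hC W22star hW22
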